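/- Let 0 → E¹ → E² → E³ → 0 be a short exact sequence of 2-periodic complexes of R-modules, with K₊ := f₋⁻¹(range(d²₊)) ⊆ E¹₋ and K₋ := f₊⁻¹(range(d²₋)) ⊆ E¹₊ (so that range(d¹₋) ⊆ K₋ and K₊ ⊆ ker(d¹₋)). Then there exists an R-linear connecting map δ : H₋(E³) → K₋/range(d¹₋) such that the sequence 0 → ker(d¹₋)/K₊ → H₋(E²) → H₋(E³) → K₋/range(d¹₋) → 0 is exact, where the first map is induced by f₋ and the second map is induced by g₋. -/

import Mathlib

/-- The homology `ker d₊ / range d₋` of a 2-periodic complex at the `+` spot;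
swapping the differentials gives the homology at the `-` spot. -/
abbrev TwoPeriodicHomology {R : Type} [CommRing R] {Ep Em : Type}
    [AddCommGroup Ep] [AddCommGroup Em] [Module R Ep] [Module R Em]
    (dp : Ep →ₗ[R] Em) (dm : Em →ₗ[R] Ep) : Type :=
  LinearMap.ker dp ⧸ (LinearMap.range dm).comap (LinearMap.ker dp).subtype

/-!
Apply the snake lemma to the morphism of rows `E¹₋ → E²₋/im d²₊ → E³₋/im d³₊ → 0` and
`0 → E¹₊ → E²₊ → E³₊` whose vertical maps are induced by `d₋`. At the right two spots the kernels
of the vertical maps are `H₋(E²)` and `H₋(E³)`, so the snake lemma provides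
`H₋(E²) → H₋(E³) → E¹₊/im d¹₋ → E²₊/im d²₋`, exact in the middle two spots; the image of the
connecting map is the kernel of the last map, which is `K₋/im d¹₋`. On the left, `ker β` is the
image of `ker d¹₋`, and `K₊` is by definition the kernel of the map from `ker d¹₋` to `H₋(E²)`.
-/

open Function LinearMap Submodule

namespace Submodule

variable {R M N : Type*} [CommRing R] [AddCommGroup M] [AddCommGroup N] [Module R M] [Module R N]

abbrev subquotientToQuotient (K p : Submodule R M) : (K ⧸ p.comap K.subtype) →ₗ[R] M ⧸ p :=
  (p.comap K.subtype).mapQ p K.subtype le_rfl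

theorem injective_subquotientToQuotient (K p : Submodule R M) :
    Injective (subquotientToQuotient K p) := by
  rw [← LinearMap.ker_eq_bot, ker_mapQ, mkQ_map_self]

theorem range_subquotientToQuotient (K p : Submodule R M) :
    range (subquotientToQuotient K p) = K.map p.mkQ := by
  rw [range_mapQ, range_subtype]

theorem exact_subquotientToQuotient_liftQ {p : Submodule R M} (d : M →ₗ[R] N)
    (hp : p ≤ ker d) : Exact (subquotientToQuotient (ker d) p) (p.liftQ d hp) := by
  rw [LinearMap.exact_iff, ker_liftQ, range_subquotientToQuotient]

theorem exact_subquotientToQuotient_mapQ {p : Submodule R M} {q : Submodule R N} (f : M →ₗ[R] N)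
    (h : p ≤ q.comap f) : Exact (subquotientToQuotient (q.comap f) p) (p.mapQ q f h) := by
  rw [LinearMap.exact_iff, ker_mapQ, range_subquotientToQuotient]

abbrev subquotientMap {K p : Submodule R M} {K' p' : Submodule R N} (f : M →ₗ[R] N)
    (hK : K ≤ K'.comap f) (hp : p ≤ p'.comap f) :
    (K ⧸ p.comap K.subtype) →ₗ[R] K' ⧸ p'.comap K'.subtype :=
  (p.comap K.subtype).mapQ (p'.comap K'.subtype) (f.restrict hK) fun _ hx => hp hx

theorem injective_subquotientMap_comap {K : Submodule R M} {K' p' : Submodule R N}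
    (f : M →ₗ[R] N) (hK : K ≤ K'.comap f) :
    Injective (subquotientMap f hK (le_refl (p'.comap f))) := by
  refine (injective_iff_map_eq_zero _).mpr fun a ha => ?_
  obtain ⟨x, rfl⟩ := Submodule.Quotient.mk_surjective _ a
  exact (Submodule.Quotient.mk_eq_zero _).mpr
    ((Submodule.Quotient.mk_eq_zero (p'.comap K'.subtype) (x := f.restrict hK x)).mp ha)

end Submodule

namespace LinearMap

variable {R M N M' N' : Type*} [CommRing R] [AddCommGroup M] [AddCommGroup N] [AddCommGroup M']
  [AddCommGroup N'] [Module R M] [Module R N] [Module R M'] [Module R N']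
  {d : M →ₗ[R] N} {d' : M' →ₗ[R] N'} {u : M →ₗ[R] M'} {v : N →ₗ[R] N'}

theorem ker_le_comap_ker_of_comp_eq (h : d' ∘ₗ u = v ∘ₗ d) : ker d ≤ (ker d').comap u :=
  fun x hx => by rw [mem_comap, mem_ker, ← comp_apply, h, comp_apply, hx, map_zero]

theorem range_le_comap_range_of_comp_eq (h : d' ∘ₗ u = v ∘ₗ d) : range d ≤ (range d').comap v :=
  map_le_iff_le_comap.mp (by rw [← range_comp, ← h]; exact range_comp_le_range u d')

theorem range_eq_map_range_of_comp_eq (h : d' ∘ₗ u = v ∘ₗ d) (hu : Surjective u) :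
    range d' = (range d).map v := by
  rw [← range_comp, ← h, range_comp_of_range_eq_top _ (range_eq_top.mpr hu)]

end LinearMap

theorem Function.Exact.mkQ_comp_mapQ {R M N P : Type*} [CommRing R]
    [AddCommGroup M] [AddCommGroup N] [AddCommGroup P] [Module R M] [Module R N] [Module R P]
    {f : M →ₗ[R] N} {g : N →ₗ[R] P} (hfg : Exact f g) {q : Submodule R N} {r : Submodule R P}
    (hqr : q ≤ r.comap g) (hrq : r ≤ q.map g) : Exact (q.mkQ ∘ₗ f) (q.mapQ r g hqr) := by
  intro y
  obtain ⟨y, rfl⟩ := Submodule.Quotient.mk_surjective q y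
  rw [mapQ_apply, Submodule.Quotient.mk_eq_zero]
  constructor
  · intro hy
    obtain ⟨w, hw, hgw⟩ := hrq hy
    obtain ⟨t, ht⟩ := (hfg (y - w)).mp (by rw [map_sub, hgw, sub_self])
    refine ⟨t, (Submodule.Quotient.eq q).mpr ?_⟩
    rwa [ht, sub_sub_cancel_left, neg_mem_iff]
  · rintro ⟨t, ht⟩
    have hmem : f t - y ∈ q := (Submodule.Quotient.eq q).mp ht
    simpa [hfg.apply_apply_eq_zero] using hqr hmem

theorem Function.Exact.exists_surjective_comp_eq {R K C C' D : Type*} [CommRing R]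
    [AddCommGroup K] [AddCommGroup C] [AddCommGroup C'] [AddCommGroup D]
    [Module R K] [Module R C] [Module R C'] [Module R D]
    {δ : K →ₗ[R] C} {ι : C' →ₗ[R] C} {G : C →ₗ[R] D}
    (hδ : Exact δ G) (hι : Exact ι G) (hinj : Injective ι) :
    ∃ δ' : K →ₗ[R] C', ι ∘ₗ δ' = δ ∧ Surjective δ' := by
  have hrange : ∀ x, δ x ∈ range ι := fun x => (hι _).mp (hδ.apply_apply_eq_zero x)
  refine ⟨codRestrictOfInjective δ ι hinj hrange, codRestrictOfInjective_comp _ _ _ _, ?_⟩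
  intro c
  obtain ⟨x, hx⟩ := (hδ (ι c)).mp (hι.apply_apply_eq_zero c)
  exact ⟨x, hinj (by rw [codRestrictOfInjective_comp_apply, hx])⟩

abbrev TwoPeriodicHomology.map {R : Type} [CommRing R] {Ep Em Fp Fm : Type}
    [AddCommGroup Ep] [AddCommGroup Em] [AddCommGroup Fp] [AddCommGroup Fm]
    [Module R Ep] [Module R Em] [Module R Fp] [Module R Fm]
    {dp : Ep →ₗ[R] Em} {dm : Em →ₗ[R] Ep} {dp' : Fp →ₗ[R] Fm} {dm' : Fm →ₗ[R] Fp}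
    {fp : Ep →ₗ[R] Fp} {fm : Em →ₗ[R] Fm} (hp : dp' ∘ₗ fp = fm ∘ₗ dp) (hm : dm' ∘ₗ fm = fp ∘ₗ dm) :
    TwoPeriodicHomology dp dm →ₗ[R] TwoPeriodicHomology dp' dm' :=
  subquotientMap fp (ker_le_comap_ker_of_comp_eq hp) (range_le_comap_range_of_comp_eq hm)

section ShortExactSequence

variable {R : Type} [CommRing R] {E1p E1m E2p E2m E3p E3m : Type}
  [AddCommGroup E1p] [AddCommGroup E1m] [AddCommGroup E2p] [AddCommGroup E2m]
  [AddCommGroup E3p] [AddCommGroup E3m]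
  [Module R E1p] [Module R E1m] [Module R E2p] [Module R E2m] [Module R E3p] [Module R E3m]
  {d1m : E1m →ₗ[R] E1p} {d2p : E2p →ₗ[R] E2m} {d2m : E2m →ₗ[R] E2p}
  {d3p : E3p →ₗ[R] E3m} {d3m : E3m →ₗ[R] E3p}
  {fp : E1p →ₗ[R] E2p} {fm : E1m →ₗ[R] E2m} {gp : E2p →ₗ[R] E3p} {gm : E2m →ₗ[R] E3m}

theorem exact_subquotientMap_twoPeriodicHomologyMap (h2 : d2m ∘ₗ d2p = 0)
    (hfm : d2m ∘ₗ fm = fp ∘ₗ d1m) (hgp : d3p ∘ₗ gp = gm ∘ₗ d2p) (hgm : d3m ∘ₗ gm = gp ∘ₗ d2m)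
    (hgsurjp : Surjective gp) (hfinjp : Injective fp) (hexm : Exact fm gm) :
    Exact (subquotientMap (p := (range d2p).comap fm) fm (ker_le_comap_ker_of_comp_eq hfm) le_rfl)
      (TwoPeriodicHomology.map hgm hgp) := by
  have hrow := hexm.mkQ_comp_mapQ (range_le_comap_range_of_comp_eq hgp)
    (range_eq_map_range_of_comp_eq hgp hgsurjp).le
  refine exact_of_comp_of_mem_range ?_ fun c hβ => ?_
  · ext t
    apply injective_subquotientToQuotient
    rw [LinearMap.zero_comp, LinearMap.zero_apply, map_zero]
    exact hrow.apply_apply_eq_zero t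
  obtain ⟨⟨y, hy⟩, rfl⟩ := Submodule.Quotient.mk_surjective _ c
  have hβ' := congrArg (subquotientToQuotient (ker d3m) (range d3p)) hβ
  rw [map_zero] at hβ'
  -- `hβ'` says, up to definitional unfolding, that the quotient map of `hrow` kills `mk y`.
  obtain ⟨t, ht⟩ := (hrow (Submodule.Quotient.mk y)).mp hβ'
  have hd : d2m (fm t) = 0 :=
    (congrArg ((range d2p).liftQ d2m (range_le_ker_iff.mpr h2)) ht).trans
      ((exact_subquotientToQuotient_liftQ d2m _).apply_apply_eq_zero
        (Submodule.Quotient.mk ⟨y, hy⟩))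
  have hdt : d1m t = 0 :=
    hfinjp (by rw [map_zero, ← LinearMap.comp_apply, ← hfm, LinearMap.comp_apply, hd])
  exact ⟨Submodule.Quotient.mk ⟨t, hdt⟩, injective_subquotientToQuotient _ _ ht⟩

theorem exists_connectingMap_exact_surjective (h2 : d2m ∘ₗ d2p = 0) (h3 : d3m ∘ₗ d3p = 0)
    (hfm : d2m ∘ₗ fm = fp ∘ₗ d1m) (hgp : d3p ∘ₗ gp = gm ∘ₗ d2p) (hgm : d3m ∘ₗ gm = gp ∘ₗ d2m)
    (hgsurjp : Surjective gp) (hgsurjm : Surjective gm) (hfinjp : Injective fp)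
    (hexp : Exact fp gp) (hexm : Exact fm gm) :
    ∃ δ : TwoPeriodicHomology d3m d3p →ₗ[R]
        (range d2m).comap fp ⧸ (range d1m).comap ((range d2m).comap fp).subtype,
      Exact (TwoPeriodicHomology.map hgm hgp) δ ∧ Surjective δ := by
  have hq := range_le_comap_range_of_comp_eq hgp
  let i₂ := (range d2p).liftQ d2m (range_le_ker_iff.mpr h2)
  let i₃ := (range d3p).liftQ d3m (range_le_ker_iff.mpr h3)
  let f₂ := (range d2p).mapQ (range d3p) gm hq
  let G := (range d1m).mapQ (range d2m) fp (range_le_comap_range_of_comp_eq hfm)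
  have hrow : Exact ((range d2p).mkQ ∘ₗ fm) f₂ :=
    hexm.mkQ_comp_mapQ hq (range_eq_map_range_of_comp_eq hgp hgsurjp).le
  have hf₂ : Surjective f₂ := by
    intro z
    obtain ⟨z, rfl⟩ := Submodule.Quotient.mk_surjective _ z
    obtain ⟨y, rfl⟩ := hgsurjm z
    exact ⟨Submodule.Quotient.mk y, rfl⟩
  have h₁ : fp ∘ₗ d1m = i₂ ∘ₗ (range d2p).mkQ ∘ₗ fm := hfm.symm
  have h₂ : gp ∘ₗ i₂ = i₃ ∘ₗ f₂ := by
    ext y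
    exact (LinearMap.congr_fun hgm y).symm
  have hι₂ := exact_subquotientToQuotient_liftQ d2m (range_le_ker_iff.mpr h2)
  have hι₃ := exact_subquotientToQuotient_liftQ d3m (range_le_ker_iff.mpr h3)
  have hπ₁ := exact_map_mkQ_range d1m
  have hπ₂ : Exact i₂ (range d2m).mkQ := by rw [LinearMap.exact_iff, ker_mkQ, range_liftQ]
  have hβδ := SnakeLemma.exact_δ'_right d1m i₂ i₃ _ f₂ hrow fp gp hexp h₁ h₂ _ hι₂ _ hι₃ _ hπ₁
    hf₂ hfinjp (TwoPeriodicHomology.map hgm hgp) (by ext; rfl)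
    (injective_subquotientToQuotient _ _)
  have hδG := SnakeLemma.exact_δ'_left d1m i₂ i₃ _ f₂ hrow fp gp hexp h₁ h₂ _ hι₃ _ hπ₁ _ hπ₂
    hf₂ hfinjp G (mapQ_mkQ _ _ _) (mkQ_surjective _)
  obtain ⟨δ, hδ, hsurj⟩ := hδG.exists_surjective_comp_eq
    (exact_subquotientToQuotient_mapQ fp _) (injective_subquotientToQuotient _ _)
  refine ⟨δ, ?_, hsurj⟩
  rwa [← (injective_subquotientToQuotient _ _).comp_exact_iff_exact, hδ]

end ShortExactSequence

theorem four_term_exact_sequence_minus_general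
    {R : Type} [CommRing R]
    {E1p E1m E2p E2m E3p E3m : Type}
    [AddCommGroup E1p] [AddCommGroup E1m] [AddCommGroup E2p] [AddCommGroup E2m]
    [AddCommGroup E3p] [AddCommGroup E3m]
    [Module R E1p] [Module R E1m] [Module R E2p] [Module R E2m]
    [Module R E3p] [Module R E3m]
    (d1m : E1m →ₗ[R] E1p)
    (d2p : E2p →ₗ[R] E2m) (d2m : E2m →ₗ[R] E2p)
    (d3p : E3p →ₗ[R] E3m) (d3m : E3m →ₗ[R] E3p)
    (h2 : d2m.comp d2p = 0) (h3 : d3m.comp d3p = 0)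
    (fp : E1p →ₗ[R] E2p) (fm : E1m →ₗ[R] E2m)
    (gp : E2p →ₗ[R] E3p) (gm : E2m →ₗ[R] E3m)
    (hfm : d2m.comp fm = fp.comp d1m)
    (hgp : d3p.comp gp = gm.comp d2p) (hgm : d3m.comp gm = gp.comp d2m)
    (hfinjp : Function.Injective fp)
    (hgsurjp : Function.Surjective gp) (hgsurjm : Function.Surjective gm)
    (hexp : LinearMap.range fp = LinearMap.ker gp)
    (hexm : LinearMap.range fm = LinearMap.ker gm) :
    ∃ (α : (↥(LinearMap.ker d1m) ⧸
            ((LinearMap.range d2p).comap fm).comap (LinearMap.ker d1m).subtype)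
            →ₗ[R] TwoPeriodicHomology d2m d2p)
      (β : TwoPeriodicHomology d2m d2p →ₗ[R] TwoPeriodicHomology d3m d3p)
      (δ : TwoPeriodicHomology d3m d3p →ₗ[R]
            (↥((LinearMap.range d2m).comap fp) ⧸
              (LinearMap.range d1m).comap ((LinearMap.range d2m).comap fp).subtype)),
      -- α is induced by f₋
      (∀ (x : E1m) (hx : x ∈ LinearMap.ker d1m) (hfx : fm x ∈ LinearMap.ker d2m),
        α (Submodule.Quotient.mk ⟨x, hx⟩) = Submodule.Quotient.mk ⟨fm x, hfx⟩) ∧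
      -- β is induced by g₋
      (∀ (y : E2m) (hy : y ∈ LinearMap.ker d2m) (hgy : gm y ∈ LinearMap.ker d3m),
        β (Submodule.Quotient.mk ⟨y, hy⟩) = Submodule.Quotient.mk ⟨gm y, hgy⟩) ∧
      -- exactness of `0 → ker(d¹₋)/K₊ → H₋(E²) → H₋(E³) → K₋/range(d¹₋) → 0`
      Function.Injective α ∧ Function.Exact α β ∧ Function.Exact β δ ∧
      Function.Surjective δ := by
  have hexp' : Exact fp gp := LinearMap.exact_iff.mpr hexp.symm
  have hexm' : Exact fm gm := LinearMap.exact_iff.mpr hexm.symm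
  obtain ⟨δ, hβδ, hδ⟩ :=
    exists_connectingMap_exact_surjective h2 h3 hfm hgp hgm hgsurjp hgsurjm hfinjp hexp' hexm'
  exact ⟨subquotientMap fm (ker_le_comap_ker_of_comp_eq hfm) le_rfl,
    TwoPeriodicHomology.map hgm hgp, δ, fun _ _ _ => rfl, fun _ _ _ => rfl,
    injective_subquotientMap_comap fm _,
    exact_subquotientMap_twoPeriodicHomologyMap h2 hfm hgp hgm hgsurjp hfinjp hexm', hβδ, hδ⟩

/-- For a short exact sequence of 2-periodic complexes
`0 → E¹ → E² → E³ → 0` with `K₊ := f₋⁻¹(range d²₊)` and `K₋ := f₊⁻¹(range d²₋)`,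
there is a connecting map `δ : H₋(E³) → K₋/range(d¹₋)` making
`0 → ker(d¹₋)/K₊ → H₋(E²) → H₋(E³) → K₋/range(d¹₋) → 0` exact, where the first
map is induced by `f₋` and the second by `g₋`. -/
theorem four_term_exact_sequence_minus
    {R : Type} [CommRing R]
    {E1p E1m E2p E2m E3p E3m : Type}
    [AddCommGroup E1p] [AddCommGroup E1m] [AddCommGroup E2p] [AddCommGroup E2m]
    [AddCommGroup E3p] [AddCommGroup E3m]
    [Module R E1p] [Module R E1m] [Module R E2p] [Module R E2m]
    [Module R E3p] [Module R E3m]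
    (d1p : E1p →ₗ[R] E1m) (d1m : E1m →ₗ[R] E1p)
    (d2p : E2p →ₗ[R] E2m) (d2m : E2m →ₗ[R] E2p)
    (d3p : E3p →ₗ[R] E3m) (d3m : E3m →ₗ[R] E3p)
    (h1 : d1m.comp d1p = 0) (h1' : d1p.comp d1m = 0)
    (h2 : d2m.comp d2p = 0) (h2' : d2p.comp d2m = 0)
    (h3 : d3m.comp d3p = 0) (h3' : d3p.comp d3m = 0)
    (fp : E1p →ₗ[R] E2p) (fm : E1m →ₗ[R] E2m)
    (gp : E2p →ₗ[R] E3p) (gm : E2m →ₗ[R] E3m)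
    (hfp : d2p.comp fp = fm.comp d1p) (hfm : d2m.comp fm = fp.comp d1m)
    (hgp : d3p.comp gp = gm.comp d2p) (hgm : d3m.comp gm = gp.comp d2m)
    (hfinjp : Function.Injective fp) (hfinjm : Function.Injective fm)
    (hgsurjp : Function.Surjective gp) (hgsurjm : Function.Surjective gm)
    (hexp : LinearMap.range fp = LinearMap.ker gp)
    (hexm : LinearMap.range fm = LinearMap.ker gm) :
    ∃ (α : (↥(LinearMap.ker d1m) ⧸
            ((LinearMap.range d2p).comap fm).comap (LinearMap.ker d1m).subtype)
            →ₗ[R] TwoPeriodicHomology d2m d2p)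
      (β : TwoPeriodicHomology d2m d2p →ₗ[R] TwoPeriodicHomology d3m d3p)
      (δ : TwoPeriodicHomology d3m d3p →ₗ[R]
            (↥((LinearMap.range d2m).comap fp) ⧸
              (LinearMap.range d1m).comap ((LinearMap.range d2m).comap fp).subtype)),
      -- α is induced by f₋
      (∀ (x : E1m) (hx : x ∈ LinearMap.ker d1m) (hfx : fm x ∈ LinearMap.ker d2m),
        α (Submodule.Quotient.mk ⟨x, hx⟩) = Submodule.Quotient.mk ⟨fm x, hfx⟩) ∧
      -- β is induced by g₋
      (∀ (y : E2m) (hy : y ∈ LinearMap.ker d2m) (hgy : gm y ∈ LinearMap.ker d3m),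
        β (Submodule.Quotient.mk ⟨y, hy⟩) = Submodule.Quotient.mk ⟨gm y, hgy⟩) ∧
      -- exactness of `0 → ker(d¹₋)/K₊ → H₋(E²) → H₋(E³) → K₋/range(d¹₋) → 0`
      Function.Injective α ∧ Function.Exact α β ∧ Function.Exact β δ ∧
      Function.Surjective δ :=
  four_term_exact_sequence_minus_general d1m d2p d2m d3p d3m h2 h3 fp fm gp gm hfm hgp hgm hfinjp
    hgsurjp hgsurjm hexp hexm
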